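/- Main theorem (two factors): Let G and H be qf-stable groups, w(x̄, ȳ) a group word, and r ≥ 1 a natural number. Then there exists a natural number n (depending on w and r) bounding the set of natural numbers m for which there exist tuples ā_1,...,ā_m and b̄_1,...,b̄_m with all entries in the ball B_r(G ∗ H) such that w(ā_i, b̄_j) = 1 in G ∗ H iff i ≤ j. -/

import Mathlib

open Monoid

/-- A group `G` is qf-stable if every group-word equation `w(x̄, ȳ) = 1` defines a
stable relation on tuples from `G`. -/
def QFStable (G : Type*) [Group G] : Prop :=
  ∀ (p q : ℕ) (w : FreeGroup (Fin p ⊕ Fin q)), ∃ n : ℕ, ∀ m : ℕ,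
    (∃ (a : Fin m → Fin p → G) (b : Fin m → Fin q → G),
      ∀ i j, FreeGroup.lift (Sum.elim (a i) (b j)) w = 1 ↔ i ≤ j) → m ≤ n

/-- The ball of radius `r` in `G ∗ H`: elements whose normal form has length at
most `r`, equivalently products of at most `r` letters from `G` or `H`. -/
def coprodBall (G H : Type*) [Group G] [Group H] (r : ℕ) : Set (Coprod G H) :=
  {x | ∃ l : List (Coprod G H), l.length ≤ r ∧
    (∀ y ∈ l, (∃ g : G, y = Coprod.inl g) ∨ (∃ h : H, y = Coprod.inr h)) ∧
    x = l.prod}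

/-!
Write every entry of a tuple from the ball as `∏_{k<r} inl g_k * inr h_k`. Then `w(ā, b̄)` is a
product of letters of `G` and of `H`, each a fixed word in the coordinates `g_k, h_k`. By the
normal form theorem, whether such a product is trivial depends only on which of the finitely many
sub-products of its letters inside `G` and inside `H` are trivial, and each of these is a word
equation in `G` or in `H`, hence stable. A relation determined by finitely many stable relations
is stable: by Ramsey's theorem a long ladder has a long subsequence on which each of these
equations is constant above and constant below the diagonal; the relation differs above and below
it, so one of the equations does too, and it then has a ladder of half the length.
-/

theorem exists_strictMono_preHomogeneous (κ : Type*) [Finite κ] [Nonempty κ] (t : ℕ) :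
    ∃ N : ℕ, ∀ {ι : Type} [LinearOrder ι] (f : ι → ι → κ) (A : Finset ι), N ≤ A.card →
      ∃ (g : Fin t → ι) (c : Fin t → κ), StrictMono g ∧ (∀ k, g k ∈ A) ∧
        ∀ k l, k < l → f (g k) (g l) = c k := by
  classical
  have := Fintype.ofFinite κ
  induction t with
  | zero => exact ⟨0, fun _ _ _ => ⟨Fin.elim0, Fin.elim0, fun k => k.elim0, fun k => k.elim0,
      fun k => k.elim0⟩⟩
  | succ t ih =>
    obtain ⟨N, hN⟩ := ih
    refine ⟨Fintype.card κ * N + 1, fun f A hA => ?_⟩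
    have hA₀ : A.Nonempty := Finset.card_pos.mp (by omega)
    set x := A.min' hA₀
    obtain ⟨c₀, -, hc₀⟩ := Finset.exists_le_card_fiber_of_mul_le_card_of_maps_to
      (f := f x) (s := A.erase x) (t := Finset.univ) (n := N) (fun _ _ => Finset.mem_univ _)
      Finset.univ_nonempty
      (by rw [Finset.card_univ, Finset.card_erase_of_mem (A.min'_mem hA₀)]; omega)
    obtain ⟨g, c, hg, hgA, hgc⟩ := hN f _ hc₀
    simp only [Finset.mem_filter, Finset.mem_erase] at hgA
    have hxg : ∀ k, x < g k := fun k =>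
      lt_of_le_of_ne (A.min'_le _ (hgA k).1.2) (hgA k).1.1.symm
    refine ⟨Fin.cons x g, Fin.cons c₀ c, Fin.strictMono_cons.2 ⟨hxg, hg⟩,
      Fin.cases (A.min'_mem hA₀) fun k => (hgA k).1.2, Fin.cases ?_ fun k => Fin.cases ?_ ?_⟩
    · exact Fin.cases (fun h => absurd h (lt_irrefl 0)) fun l _ => (hgA l).2
    · exact fun h => absurd h (Fin.not_lt_zero _)
    · exact fun l hkl => hgc k l (Fin.succ_lt_succ_iff.1 hkl)

theorem exists_strictMono_homogeneous (κ : Type*) [Finite κ] [Nonempty κ] (t : ℕ) :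
    ∃ N : ℕ, ∀ {ι : Type} [LinearOrder ι] (f : ι → ι → κ) (A : Finset ι), N ≤ A.card →
      ∃ (g : Fin t → ι) (c : κ), StrictMono g ∧ (∀ k, g k ∈ A) ∧
        ∀ k l, k < l → f (g k) (g l) = c := by
  classical
  have := Fintype.ofFinite κ
  obtain ⟨N, hN⟩ := exists_strictMono_preHomogeneous κ (Fintype.card κ * t + 1)
  refine ⟨N, fun f A hA => ?_⟩
  obtain ⟨g, c, hg, hgA, hgc⟩ := hN f A hA
  obtain ⟨c₀, -, hc₀⟩ := Finset.exists_le_card_fiber_of_mul_le_card_of_maps_to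
    (f := c) (s := Finset.univ) (t := Finset.univ) (n := t) (fun _ _ => Finset.mem_univ _)
    Finset.univ_nonempty (by simp)
  set e := Finset.orderEmbOfCardLe _ hc₀
  refine ⟨g ∘ e, c₀, hg.comp e.strictMono, fun k => hgA _, fun k l hkl => ?_⟩
  rw [Function.comp_apply, Function.comp_apply, hgc _ _ (e.strictMono hkl)]
  exact (Finset.mem_filter.1 (Finset.orderEmbOfCardLe_mem _ hc₀ k)).2

def IsStableRel {α β : Type*} (R : α → β → Prop) : Prop :=
  ∃ n : ℕ, ∀ m : ℕ, (∃ (a : Fin m → α) (b : Fin m → β), ∀ i j, R (a i) (b j) ↔ i ≤ j) → m ≤ n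

section Stability

variable {α β : Type*}

theorem IsStableRel.of_iff_comp {α' β' : Type*} {R' : α' → β' → Prop} (h : IsStableRel R')
    {R : α → β → Prop} (f : α → α') (g : β → β') (hR : ∀ x y, R x y ↔ R' (f x) (g y)) :
    IsStableRel R := by
  obtain ⟨n, hn⟩ := h
  exact ⟨n, fun m ⟨a, b, hab⟩ =>
    hn m ⟨f ∘ a, g ∘ b, fun i j => (hR (a i) (b j)).symm.trans (hab i j)⟩⟩

theorem exists_ladder_of_offDiag {E : α → β → Prop} {N : ℕ} (a : Fin (2 * N + 2) → α)
    (b : Fin (2 * N + 2) → β) {c₁ c₂ : Prop} (hc : ¬(c₁ ↔ c₂))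
    (h₁ : ∀ k l, k < l → (E (a k) (b l) ↔ c₁)) (h₂ : ∀ k l, l < k → (E (a k) (b l) ↔ c₂)) :
    ∃ (a' : Fin (N + 1) → α) (b' : Fin (N + 1) → β), ∀ u v, E (a' u) (b' v) ↔ u ≤ v := by
  by_cases hc₁ : c₁
  · have hc₂ : ¬c₂ := fun h => hc (iff_of_true hc₁ h)
    refine ⟨fun u => a ⟨2 * u, by omega⟩, fun v => b ⟨2 * v + 1, by omega⟩, fun u v => ?_⟩
    rcases le_or_gt u v with huv | huv
    · rw [h₁ _ _ (Fin.mk_lt_mk.2 (by rw [Fin.le_def] at huv; omega))]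
      exact iff_of_true hc₁ huv
    · rw [h₂ _ _ (Fin.mk_lt_mk.2 (by rw [Fin.lt_def] at huv; omega))]
      exact iff_of_false hc₂ (not_le.2 huv)
  · have hc₂ : c₂ := by tauto
    refine ⟨fun u => a ⟨2 * (N - u) + 1, by omega⟩, fun v => b ⟨2 * (N - v), by omega⟩,
      fun u v => ?_⟩
    rcases le_or_gt u v with huv | huv
    · rw [h₂ _ _ (Fin.mk_lt_mk.2 (by rw [Fin.le_def] at huv; omega))]
      exact iff_of_true hc₂ huv
    · rw [h₁ _ _ (Fin.mk_lt_mk.2 (by rw [Fin.lt_def] at huv; omega))]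
      exact iff_of_false hc₁ (not_le.2 huv)

theorem IsStableRel.of_determined {σ : Type*} [Finite σ] {E : σ → α → β → Prop}
    (hE : ∀ s, IsStableRel (E s)) {R : α → β → Prop}
    (hR : ∀ x y x' y', (∀ s, E s x y ↔ E s x' y') → (R x y ↔ R x' y')) : IsStableRel R := by
  choose n hn using hE
  obtain ⟨N, hN⟩ := (Set.finite_range n).bddAbove
  obtain ⟨M, hM⟩ := exists_strictMono_homogeneous ((σ → Prop) × (σ → Prop)) (2 * N + 2)
  refine ⟨M, fun m ⟨a, b, hab⟩ => ?_⟩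
  by_contra! hm
  obtain ⟨g, ⟨c₁, c₂⟩, hg, -, hgc⟩ :=
    hM (fun i j => (fun s => E s (a i) (b j), fun s => E s (a j) (b i))) Finset.univ
      (by rw [Finset.card_univ, Fintype.card_fin]; omega)
  have h₁ : ∀ s k l, k < l → (E s (a (g k)) (b (g l)) ↔ c₁ s) := fun s k l hkl =>
    Iff.of_eq (congrFun (congrArg Prod.fst (hgc k l hkl)) s)
  have h₂ : ∀ s k l, l < k → (E s (a (g k)) (b (g l)) ↔ c₂ s) := fun s k l hlk =>
    Iff.of_eq (congrFun (congrArg Prod.snd (hgc l k hlk)) s)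
  obtain ⟨s, hs⟩ : ∃ s, ¬(c₁ s ↔ c₂ s) := by
    by_contra! hc
    have h01 : (⟨0, by omega⟩ : Fin (2 * N + 2)) < ⟨1, by omega⟩ := Fin.mk_lt_mk.2 one_pos
    have := hR _ _ _ _ fun s => (h₁ s _ _ h01).trans ((hc s).trans (h₂ s _ _ h01).symm)
    rw [hab, hab] at this
    exact not_le.2 (hg h01) (this.1 (hg h01).le)
  obtain ⟨a', b', hab'⟩ := exists_ladder_of_offDiag (a ∘ g) (b ∘ g) hs (h₁ s) (h₂ s)
  have := hn s (N + 1) ⟨a', b', hab'⟩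
  have := hN ⟨s, rfl⟩
  omega

end Stability

theorem FreeGroup.lift_map_apply {α β G : Type*} [Group G] (f : β → G) (g : α → β)
    (x : FreeGroup α) : FreeGroup.lift f (FreeGroup.map g x) = FreeGroup.lift (f ∘ g) x := by
  induction x using FreeGroup.induction_on with
  | mul _ _ h₁ h₂ => simp [h₁, h₂]
  | _ => simp

theorem QFStable.isStableRel_lift {G : Type*} [Group G] (hG : QFStable G)
    {α β γ : Type*} [Finite α] [Finite β] [Finite γ] (w : FreeGroup ((α ⊕ β) × γ)) :
    IsStableRel fun (x : α → γ → G) (y : β → γ → G) =>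
      FreeGroup.lift (fun z => Sum.elim x y z.1 z.2) w = 1 := by
  obtain ⟨p, ⟨e⟩⟩ := Finite.exists_equiv_fin (α × γ)
  obtain ⟨q, ⟨e'⟩⟩ := Finite.exists_equiv_fin (β × γ)
  set w' := FreeGroup.map (Sum.map e e' ∘ Equiv.sumProdDistrib α β γ) w
  have hw' : IsStableRel fun (x : Fin p → G) (y : Fin q → G) =>
      FreeGroup.lift (Sum.elim x y) w' = 1 := hG p q w'
  refine hw'.of_iff_comp (fun x => Function.uncurry x ∘ e.symm)
    (fun y => Function.uncurry y ∘ e'.symm) fun x y => ?_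
  rw [FreeGroup.lift_map_apply]
  congr! 3
  funext ⟨z, k⟩
  cases z <;> simp

namespace Monoid.Coprod

section NormalForm

universe u v

variable {G : Type u} {H : Type v} [Group G] [Group H]

/-- `G ∗ H` embeds into the free product of this `Bool`-indexed family, whose reduced words are
available as `Monoid.CoprodI.Word`. -/
def boolFamily (G : Type u) (H : Type v) (b : Bool) : Type (max u v) :=
  cond b (ULift.{v} G) (ULift.{u} H)

instance : ∀ b, Group (boolFamily G H b)
  | true => inferInstanceAs (Group (ULift G))
  | false => inferInstanceAs (Group (ULift H))

def toCoprodI : Coprod G H →* CoprodI (boolFamily G H) :=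
  Coprod.lift ((CoprodI.of (i := true)).comp MulEquiv.ulift.symm.toMonoidHom)
    ((CoprodI.of (i := false)).comp MulEquiv.ulift.symm.toMonoidHom)

def ofSum : G ⊕ H → Coprod G H := Sum.elim inl inr

def sumToSigma : G ⊕ H → Σ b, boolFamily G H b :=
  Sum.elim (fun g => ⟨true, ULift.up g⟩) (fun h => ⟨false, ULift.up h⟩)

theorem toCoprodI_ofSum (x : G ⊕ H) : toCoprodI (ofSum x) = CoprodI.of (sumToSigma x).2 := by
  cases x <;> rfl

theorem prod_map_ofSum_ne_one {l : List (G ⊕ H)} (hl : l ≠ []) (hl₁ : ∀ x ∈ l, ofSum x ≠ 1)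
    (hchain : l.IsChain fun x y => x.isLeft ≠ y.isLeft) : (l.map ofSum).prod ≠ 1 := by
  classical
  have hne : ∀ x ∈ l.map sumToSigma, Sigma.snd x ≠ 1 := by
    simp only [List.mem_map]
    rintro _ ⟨(g | h), hx, rfl⟩ h1
    · exact hl₁ _ hx (by simp [ofSum, show g = 1 from congrArg ULift.down h1])
    · exact hl₁ _ hx (by simp [ofSum, show h = 1 from congrArg ULift.down h1])
  have hchain' : (l.map sumToSigma).IsChain fun x y => x.1 ≠ y.1 :=
    (List.isChain_map _).2 (hchain.imp fun {x y} => by cases x <;> cases y <;> simp [sumToSigma])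
  let W : CoprodI.Word (boolFamily G H) := ⟨l.map sumToSigma, hne, hchain'⟩
  intro h1
  have hW : W.prod = CoprodI.Word.empty.prod := by
    rw [CoprodI.Word.prod_empty, ← map_one toCoprodI, ← h1, map_list_prod, List.map_map]
    simp only [CoprodI.Word.prod, W, List.map_map]
    exact congrArg List.prod (List.map_congr_left fun x _ => (toCoprodI_ofSum x).symm)
  have : W = CoprodI.Word.empty := CoprodI.Word.equiv.symm.injective hW
  exact hl (List.map_eq_nil_iff.1 (congrArg CoprodI.Word.toList this))

end NormalForm

section Segments

variable {G H ι : Type*} [Group G] [Group H]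

/-- A segment `(b, S)` stands for the letter `∏_{i ∈ S} u i` of `G` if `b`, and for the letter
`∏_{i ∈ S} v i` of `H` otherwise. -/
def segLetter (u : ι → G) (v : ι → H) (s : Bool × List ι) : G ⊕ H :=
  bif s.1 then .inl (s.2.map u).prod else .inr (s.2.map v).prod

def segProd (u : ι → G) (v : ι → H) (L : List (Bool × List ι)) : Coprod G H :=
  (L.map fun s => ofSum (segLetter u v s)).prod

theorem ofSum_segLetter_eq_one_iff (u : ι → G) (v : ι → H) (s : Bool × List ι) :
    ofSum (segLetter u v s) = 1 ↔
      bif s.1 then (s.2.map u).prod = 1 else (s.2.map v).prod = 1 := by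
  rcases s with ⟨_ | _, S⟩
  · exact map_eq_one_iff _ inr_injective
  · exact map_eq_one_iff _ inl_injective

theorem segProd_merge (u : ι → G) (v : ι → H) (l₁ l₂ : List (Bool × List ι)) (b : Bool)
    (S S' : List ι) :
    segProd u v (l₁ ++ (b, S) :: (b, S') :: l₂) = segProd u v (l₁ ++ (b, S ++ S') :: l₂) := by
  cases b <;> simp [segProd, segLetter, ofSum, mul_assoc]

theorem segProd_erase {u : ι → G} {v : ι → H} (l₁ l₂ : List (Bool × List ι))
    {s : Bool × List ι} (hs : ofSum (segLetter u v s) = 1) :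
    segProd u v (l₁ ++ s :: l₂) = segProd u v (l₁ ++ l₂) := by
  simp [segProd, hs]

theorem segProd_ne_one {u : ι → G} {v : ι → H} {L : List (Bool × List ι)} (hL : L ≠ [])
    (hchain : L.IsChain fun s t => s.1 ≠ t.1) (hL₁ : ∀ s ∈ L, ofSum (segLetter u v s) ≠ 1) :
    segProd u v L ≠ 1 := by
  have hisLeft : ∀ s, (segLetter u v s).isLeft = s.1 := by
    rintro ⟨_ | _, S⟩ <;> rfl
  rw [segProd, show (fun s => ofSum (segLetter u v s)) = ofSum ∘ segLetter u v from rfl,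
    ← List.map_map]
  refine prod_map_ofSum_ne_one (by simpa using hL)
    (by simpa only [List.forall_mem_map] using hL₁) ?_
  exact (List.isChain_map _).2 (hchain.imp fun {s t} => by simp only [hisLeft, imp_self])

end Segments

section Determinacy

open scoped List

variable {G H ι : Type*} [Group G] [Group H] {T : List ι} {u u' : ι → G} {v v' : ι → H}

/-- Reduce the word by merging adjacent letters from the same factor and deleting trivial
letters: by the normal form theorem it is trivial iff this empties it, and every letter that
occurs is a sub-product along a sublist of the original word. -/
theorem segProd_eq_one_iff_of_sublist
    (hu : ∀ S, S <+ T → ((S.map u).prod = 1 ↔ (S.map u').prod = 1))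
    (hv : ∀ S, S <+ T → ((S.map v).prod = 1 ↔ (S.map v').prod = 1))
    (L : List (Bool × List ι)) (hL : L.flatMap Prod.snd <+ T) :
    segProd u v L = 1 ↔ segProd u' v' L = 1 := by
  induction hn : L.length using Nat.strong_induction_on generalizing L with
  | _ n ih =>
    by_cases hmerge : ∃ l₁ b S S' l₂, L = l₁ ++ (b, S) :: (b, S') :: l₂
    · obtain ⟨l₁, b, S, S', l₂, rfl⟩ := hmerge
      rw [segProd_merge, segProd_merge]
      exact ih _ (by simp at hn ⊢; omega) _ (by simpa using hL) rfl
    have hletter : ∀ s ∈ L, ofSum (segLetter u v s) = 1 ↔ ofSum (segLetter u' v' s) = 1 := by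
      intro s hs
      have hsT : s.2 <+ T :=
        (List.infix_of_mem_flatten (List.mem_map_of_mem hs)).sublist.trans hL
      rcases s with ⟨_ | _, S⟩
      · simpa only [ofSum_segLetter_eq_one_iff, cond_true, cond_false] using hv S hsT
      · simpa only [ofSum_segLetter_eq_one_iff, cond_true, cond_false] using hu S hsT
    by_cases herase : ∃ l₁ s l₂, L = l₁ ++ s :: l₂ ∧ ofSum (segLetter u v s) = 1
    · obtain ⟨l₁, s, l₂, rfl, hs⟩ := herase
      rw [segProd_erase l₁ l₂ hs, segProd_erase l₁ l₂ ((hletter s (by simp)).1 hs)]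
      refine ih _ (by simp at hn ⊢; omega) _ (List.Sublist.trans ?_ hL) rfl
      simp only [List.flatMap_append, List.flatMap_cons]
      exact (List.sublist_append_right _ _).append_left _
    push Not at hmerge herase
    rcases eq_or_ne L [] with rfl | hL₀
    · simp [segProd]
    have hchain : L.IsChain fun s t => s.1 ≠ t.1 :=
      List.isChain_iff_forall_rel_of_append_cons_cons.2 fun ⟨b, S⟩ ⟨b', S'⟩ l₁ l₂ h hbb' =>
        hmerge l₁ b S S' l₂ (by rw [h, show b' = b from hbb'.symm])
    have hL₁ : ∀ s ∈ L, ofSum (segLetter u v s) ≠ 1 := fun s hs => by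
      obtain ⟨l₁, l₂, rfl⟩ := List.append_of_mem hs
      exact herase l₁ s l₂ rfl
    exact iff_of_false (segProd_ne_one hL₀ hchain hL₁)
      (segProd_ne_one hL₀ hchain fun s hs => by rw [Ne, ← hletter s hs]; exact hL₁ s hs)

theorem prod_eq_one_iff_of_sublist (tag : ι → Bool)
    (hu : ∀ S, S <+ T → ((S.map u).prod = 1 ↔ (S.map u').prod = 1))
    (hv : ∀ S, S <+ T → ((S.map v).prod = 1 ↔ (S.map v').prod = 1)) :
    (T.map fun i => bif tag i then inl (u i) else inr (v i)).prod = 1 ↔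
      (T.map fun i => bif tag i then inl (u' i) else inr (v' i)).prod = 1 := by
  have hseg (u : ι → G) (v : ι → H) :
      (T.map fun i => bif tag i then inl (u i) else inr (v i)).prod =
        segProd u v (T.map fun i => (tag i, [i])) := by
    simp only [segProd, List.map_map]
    refine congrArg List.prod (List.map_congr_left fun i _ => ?_)
    simp only [Function.comp_apply, segLetter]
    cases tag i <;> simp [ofSum]
  rw [hseg, hseg]
  exact segProd_eq_one_iff_of_sublist hu hv _ (by simp [List.flatMap_map])

end Determinacy

end Monoid.Coprod

section Template

variable {G H : Type*} [Group G] [Group H]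

def ballWord {r : ℕ} (g : Fin r → G) (h : Fin r → H) : Coprod G H :=
  (List.ofFn fun k => Coprod.inl (g k) * Coprod.inr (h k)).prod

theorem exists_ballWord_eq_of_mem_coprodBall {r : ℕ} {x : Coprod G H}
    (hx : x ∈ coprodBall G H r) : ∃ (g : Fin r → G) (h : Fin r → H), ballWord g h = x := by
  obtain ⟨l, hlen, hl, rfl⟩ := hx
  induction l generalizing r with
  | nil => exact ⟨1, 1, by simp [ballWord]⟩
  | cons y l ih =>
    obtain ⟨r, rfl⟩ : ∃ r', r = r' + 1 := Nat.exists_eq_add_one.2 (by simp at hlen; omega)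
    obtain ⟨g, h, hgh⟩ := ih (by simpa using hlen) fun z hz => hl z (List.mem_cons_of_mem _ hz)
    rcases hl y List.mem_cons_self with ⟨g₀, rfl⟩ | ⟨h₀, rfl⟩
    · exact ⟨Fin.cons g₀ g, Fin.cons 1 h, by simp [ballWord, List.ofFn_succ, ← hgh]⟩
    · exact ⟨Fin.cons 1 g, Fin.cons h₀ h, by simp [ballWord, List.ofFn_succ, ← hgh]⟩

variable {X : Type*} (σG : X → G) (σH : X → H)

def templateProd (T : List (Bool × FreeGroup X)) : Coprod G H :=
  (T.map fun i => bif i.1 then Coprod.inl (FreeGroup.lift σG i.2)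
    else Coprod.inr (FreeGroup.lift σH i.2)).prod

theorem templateProd_flatten (L : List (List (Bool × FreeGroup X))) :
    templateProd σG σH L.flatten = (L.map (templateProd σG σH)).prod := by
  simp only [templateProd, List.map_flatten, List.prod_flatten, List.map_map]
  rfl

def invTemplate (T : List (Bool × FreeGroup X)) : List (Bool × FreeGroup X) :=
  (T.map fun i => (i.1, i.2⁻¹)).reverse

theorem templateProd_invTemplate (T : List (Bool × FreeGroup X)) :
    templateProd σG σH (invTemplate T) = (templateProd σG σH T)⁻¹ := by
  rw [templateProd, templateProd, List.prod_inv_reverse, invTemplate, List.map_reverse,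
    List.map_map, List.map_map]
  congr 2
  refine List.map_congr_left fun ⟨b, w⟩ _ => ?_
  cases b <;> simp

end Template

section WordTemplate

variable {G H V : Type*} [Group G] [Group H] (r : ℕ)

def blockTemplate (z : V) : List (Bool × FreeGroup (V × Fin r)) :=
  (List.ofFn fun k => [(true, FreeGroup.of (z, k)), (false, FreeGroup.of (z, k))]).flatten

def wordTemplate [DecidableEq V] (w : FreeGroup V) : List (Bool × FreeGroup (V × Fin r)) :=
  w.toWord.flatMap fun x =>
    bif x.2 then blockTemplate r x.1 else invTemplate (blockTemplate r x.1)

variable {r}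

theorem templateProd_blockTemplate (σG : V × Fin r → G) (σH : V × Fin r → H) (z : V) :
    templateProd σG σH (blockTemplate r z) =
      ballWord (fun k => σG (z, k)) (fun k => σH (z, k)) := by
  rw [blockTemplate, templateProd_flatten, List.map_ofFn, ballWord]
  simp [templateProd, Function.comp_def]

theorem templateProd_wordTemplate [DecidableEq V] (σG : V × Fin r → G) (σH : V × Fin r → H)
    (w : FreeGroup V) :
    templateProd σG σH (wordTemplate r w) =
      FreeGroup.lift (fun z => ballWord (fun k => σG (z, k)) (fun k => σH (z, k))) w := by
  conv_rhs => rw [← FreeGroup.mk_toWord (x := w), FreeGroup.lift_mk]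
  rw [wordTemplate, List.flatMap_def, templateProd_flatten, List.map_map]
  congr 1
  refine List.map_congr_left fun ⟨z, b⟩ _ => ?_
  cases b <;> simp [templateProd_invTemplate, templateProd_blockTemplate]

end WordTemplate

theorem isStableRel_lift_ballWord {G H : Type*} [Group G] [Group H] (hG : QFStable G)
    (hH : QFStable H) {α β : Type*} [Finite α] [Finite β] [DecidableEq α] [DecidableEq β]
    (w : FreeGroup (α ⊕ β)) (r : ℕ) :
    IsStableRel fun (x : (α → Fin r → G) × (α → Fin r → H))
        (y : (β → Fin r → G) × (β → Fin r → H)) =>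
      FreeGroup.lift (Sum.elim (fun t => ballWord (x.1 t) (x.2 t))
        (fun t => ballWord (y.1 t) (y.2 t))) w = 1 := by
  set T := wordTemplate r w
  have hT : ∀ (x : (α → Fin r → G) × (α → Fin r → H)) (y : (β → Fin r → G) × (β → Fin r → H)),
      FreeGroup.lift (Sum.elim (fun t => ballWord (x.1 t) (x.2 t))
      (fun t => ballWord (y.1 t) (y.2 t))) w =
        templateProd (fun z => Sum.elim x.1 y.1 z.1 z.2) (fun z => Sum.elim x.2 y.2 z.1 z.2) T := by
    intro x y
    rw [templateProd_wordTemplate]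
    congr 2
    funext t
    cases t <;> rfl
  refine IsStableRel.of_determined (σ := T.sublists.toFinset ⊕ T.sublists.toFinset)
    (E := Sum.elim
      (fun S (x : (α → Fin r → G) × (α → Fin r → H)) (y : (β → Fin r → G) × (β → Fin r → H)) =>
        FreeGroup.lift (fun z => Sum.elim x.1 y.1 z.1 z.2) (S.1.map Prod.snd).prod = 1)
      (fun S x y => FreeGroup.lift (fun z => Sum.elim x.2 y.2 z.1 z.2) (S.1.map Prod.snd).prod = 1))
    ?_ fun x y x' y' hE => ?_
  · rintro (S | S)
    · exact (hG.isStableRel_lift _).of_iff_comp Prod.fst Prod.fst fun _ _ => Iff.rfl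
    · exact (hH.isStableRel_lift _).of_iff_comp Prod.snd Prod.snd fun _ _ => Iff.rfl
  have hmem (S : List _) (hS : S.Sublist T) : S ∈ T.sublists.toFinset :=
    List.mem_toFinset.2 (List.mem_sublists.2 hS)
  rw [hT, hT]
  refine Coprod.prod_eq_one_iff_of_sublist Prod.fst (fun S hS => ?_) (fun S hS => ?_)
  · simpa [map_list_prod, List.map_map, Function.comp_def] using hE (.inl ⟨S, hmem S hS⟩)
  · simpa [map_list_prod, List.map_map, Function.comp_def] using hE (.inr ⟨S, hmem S hS⟩)

theorem main_theorem_two_factors_general {G H : Type*} [Group G] [Group H]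
    (hG : QFStable G) (hH : QFStable H)
    (p q : ℕ) (w : FreeGroup (Fin p ⊕ Fin q)) (r : ℕ) :
    ∃ n : ℕ, ∀ m : ℕ,
      (∃ (a : Fin m → Fin p → Coprod G H) (b : Fin m → Fin q → Coprod G H),
        (∀ i t, a i t ∈ coprodBall G H r) ∧ (∀ j t, b j t ∈ coprodBall G H r) ∧
        ∀ i j, FreeGroup.lift (Sum.elim (a i) (b j)) w = 1 ↔ i ≤ j) → m ≤ n := by
  obtain ⟨n, hn⟩ := isStableRel_lift_ballWord hG hH w r
  refine ⟨n, fun m ⟨a, b, ha, hb, hab⟩ => hn m ?_⟩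
  choose ga ha' hgha using fun i t => exists_ballWord_eq_of_mem_coprodBall (ha i t)
  choose gb hb' hghb using fun j t => exists_ballWord_eq_of_mem_coprodBall (hb j t)
  refine ⟨fun i => (ga i, ha' i), fun j => (gb j, hb' j), fun i j => ?_⟩
  simp only [hgha, hghb]
  exact hab i j

/-- **Main theorem (two factors).** Let `G` and `H` be qf-stable groups, `w(x̄, ȳ)`
a group word, and `r ≥ 1`. Then there exists `n` (depending on `w` and `r`)
bounding the `m` for which there exist tuples `ā_1, ..., ā_m` and `b̄_1, ..., b̄_m`
with all entries in the ball `B_r(G ∗ H)` such that `w(ā_i, b̄_j) = 1` iff `i ≤ j`. -/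
theorem main_theorem_two_factors {G H : Type*} [Group G] [Group H]
    (hG : QFStable G) (hH : QFStable H)
    (p q : ℕ) (w : FreeGroup (Fin p ⊕ Fin q)) (r : ℕ) (hr : 1 ≤ r) :
    ∃ n : ℕ, ∀ m : ℕ,
      (∃ (a : Fin m → Fin p → Coprod G H) (b : Fin m → Fin q → Coprod G H),
        (∀ i t, a i t ∈ coprodBall G H r) ∧ (∀ j t, b j t ∈ coprodBall G H r) ∧
        ∀ i j, FreeGroup.lift (Sum.elim (a i) (b j)) w = 1 ↔ i ≤ j) → m ≤ n :=
  main_theorem_two_factors_general hG hH p q w r
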